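/- arXiv:2206.00555 — 2 statements merged into one kernel-verified Lean document; each statement's English description precedes it below -/
import Mathlib

section
/- Let R > 0, n ≥ 1, and let λ₁, …, λₙ ∈ ℝ be all nonzero. Define τ̄ := max( Σ_{i : λᵢ > 0} 2R/λᵢ , Σ_{i : λᵢ < 0} 2R/(−λᵢ) ). Then for every x ∈ ℝ and every t ≥ 0, the Lebesgue measure of the union ⋃_{i=1}^n {s ∈ [0, t] : |x − λᵢ·(t − s)| ≤ R} is at most τ̄. In particular, if x ≥ R the measure is at most Σ_{i : λᵢ > 0} 2R/λᵢ, and if x ≤ −R it is at most Σ_{i : λᵢ < 0} 2R/(−λᵢ). -/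
/-!
A characteristic of speed `λ ≠ 0` crosses `[-R, R]` in time `2R/|λ|`, so each `I_λ(x,t)` has
measure at most `2R/|λ|`. For `x ≥ R`, a characteristic of negative speed traced backward from
`x` only moves further right, so it meets `[-R, R]` at most at `s = t`; only the positive speeds
contribute. For `|x| ≤ R`, every `I_λ(x,t)` is contained in `[t - 2R/|λ|, t]`, and
`2R/|λ| ≤ τ̄`, so the whole union lies in `[t - τ̄, t]`. The case `x ≤ -R` is the mirror image
under `(x, λ) ↦ (-x, -λ)`.
-/

open MeasureTheory Set

/-- The paper's `I_λ(x,t)`. -/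
def undampedTimes (R x t l : ℝ) : Set ℝ :=
  {s : ℝ | s ∈ Icc 0 t ∧ |x - l * (t - s)| ≤ R}

/-- `τ̄ = max (positiveSpeedDelay R lam) (positiveSpeedDelay R (-lam))`. -/
noncomputable def positiveSpeedDelay {ι : Type*} [Fintype ι] (R : ℝ) (lam : ι → ℝ) : ℝ :=
  ∑ i ∈ Finset.univ.filter (fun i => 0 < lam i), 2 * R / lam i

section undampedTimes

variable {R x t l : ℝ}

theorem undampedTimes_neg : undampedTimes R (-x) t (-l) = undampedTimes R x t l := by
  ext s
  simp only [undampedTimes, mem_ofPred_eq, ← abs_neg (x - l * (t - s))]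
  ring_nf

theorem undampedTimes_subset_Icc_of_pos (hl : 0 < l) :
    undampedTimes R x t l ⊆ Icc (t - (x + R) / l) (t - (x - R) / l) := by
  rintro s ⟨-, hs⟩
  obtain ⟨hlow, hup⟩ := abs_le.mp hs
  have h₁ : (x - R) / l ≤ t - s := (div_le_iff₀ hl).mpr (by linarith)
  have h₂ : t - s ≤ (x + R) / l := (le_div_iff₀ hl).mpr (by linarith)
  constructor <;> linarith

theorem volume_undampedTimes_le (hl : 0 < l) :
    volume (undampedTimes R x t l) ≤ ENNReal.ofReal (2 * R / l) :=
  calc volume (undampedTimes R x t l)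
      ≤ volume (Icc (t - (x + R) / l) (t - (x - R) / l)) :=
        measure_mono (undampedTimes_subset_Icc_of_pos hl)
    _ = ENNReal.ofReal (2 * R / l) := by
        rw [Real.volume_Icc]
        congr 1
        field_simp
        ring

theorem undampedTimes_subset_singleton (hx : R ≤ x) (hl : l < 0) :
    undampedTimes R x t l ⊆ {t} := by
  rintro s ⟨⟨-, hst⟩, hs⟩
  have hdist : -l * (t - s) ≤ 0 := by linarith [(abs_le.mp hs).2]
  have : t - s ≤ 0 := nonpos_of_mul_nonpos_right hdist (neg_pos.mpr hl)
  exact le_antisymm hst (by linarith)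

theorem undampedTimes_subset_Icc_of_abs_le (hx : |x| ≤ R) (hl : 0 < l) :
    undampedTimes R x t l ⊆ Icc (t - 2 * R / l) t := by
  intro s hs
  have hxR : (x + R) / l ≤ 2 * R / l := by
    gcongr
    linarith [(abs_le.mp hx).2]
  exact ⟨by linarith [(undampedTimes_subset_Icc_of_pos hl hs).1], hs.1.2⟩

end undampedTimes

section positiveSpeedDelay

variable {ι : Type*} [Fintype ι] {R : ℝ} {lam : ι → ℝ}

theorem positiveSpeedDelay_neg :
    positiveSpeedDelay R (-lam) =
      ∑ i ∈ Finset.univ.filter (fun i => lam i < 0), 2 * R / (-lam i) := by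
  simp only [positiveSpeedDelay, Pi.neg_apply, neg_pos]

theorem div_le_positiveSpeedDelay (hR : 0 ≤ R) {i : ι} (hi : 0 < lam i) :
    2 * R / lam i ≤ positiveSpeedDelay R lam :=
  Finset.single_le_sum (f := fun i => 2 * R / lam i)
    (fun j hj => div_nonneg (by positivity) (Finset.mem_filter.mp hj).2.le)
    (Finset.mem_filter.mpr ⟨Finset.mem_univ i, hi⟩)

theorem volume_iUnion_undampedTimes_le_of_le (hR : 0 ≤ R) {x t : ℝ} (hx : R ≤ x)
    (hlam : ∀ i, lam i ≠ 0) :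
    volume (⋃ i, undampedTimes R x t (lam i)) ≤ ENNReal.ofReal (positiveSpeedDelay R lam) :=
  calc volume (⋃ i, undampedTimes R x t (lam i))
      ≤ ∑ i, volume (undampedTimes R x t (lam i)) := measure_iUnion_fintype_le _ _
    _ ≤ ∑ i, if 0 < lam i then ENNReal.ofReal (2 * R / lam i) else 0 := by
        refine Finset.sum_le_sum fun i _ => ?_
        split_ifs with hi
        · exact volume_undampedTimes_le hi
        · have hneg : lam i < 0 := lt_of_le_of_ne (not_lt.mp hi) (hlam i)
          exact (measure_mono_null (undampedTimes_subset_singleton hx hneg)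
            (measure_singleton t)).le
    _ = ENNReal.ofReal (positiveSpeedDelay R lam) := by
        rw [positiveSpeedDelay, ENNReal.ofReal_sum_of_nonneg, Finset.sum_filter]
        exact fun i hi => div_nonneg (by positivity) (Finset.mem_filter.mp hi).2.le

theorem volume_iUnion_undampedTimes_le_max (hR : 0 ≤ R) {x t : ℝ} (hx : |x| ≤ R)
    (hlam : ∀ i, lam i ≠ 0) :
    volume (⋃ i, undampedTimes R x t (lam i)) ≤
      ENNReal.ofReal (max (positiveSpeedDelay R lam) (positiveSpeedDelay R (-lam))) := by
  set T := max (positiveSpeedDelay R lam) (positiveSpeedDelay R (-lam))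
  have hsub : ∀ i, undampedTimes R x t (lam i) ⊆ Icc (t - T) t := by
    intro i
    rcases (hlam i).lt_or_gt with hneg | hpos
    · have hle : 2 * R / -lam i ≤ positiveSpeedDelay R (-lam) :=
        div_le_positiveSpeedDelay (lam := -lam) hR (neg_pos.mpr hneg)
      rw [← undampedTimes_neg]
      refine (undampedTimes_subset_Icc_of_abs_le (by rwa [abs_neg]) (neg_pos.mpr hneg)).trans
        (Icc_subset_Icc_left ?_)
      linarith [le_max_right (positiveSpeedDelay R lam) (positiveSpeedDelay R (-lam))]
    · have hle := div_le_positiveSpeedDelay hR hpos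
      refine (undampedTimes_subset_Icc_of_abs_le hx hpos).trans (Icc_subset_Icc_left ?_)
      linarith [le_max_left (positiveSpeedDelay R lam) (positiveSpeedDelay R (-lam))]
  calc volume (⋃ i, undampedTimes R x t (lam i))
      ≤ volume (Icc (t - T) t) := measure_mono (iUnion_subset hsub)
    _ = ENNReal.ofReal T := by rw [Real.volume_Icc, sub_sub_cancel]

end positiveSpeedDelay

theorem stmt_10_general (R : ℝ) (hR : 0 < R) (n : ℕ) (lam : Fin n → ℝ)
    (hlam : ∀ i, lam i ≠ 0) :
    ∀ x t : ℝ, 0 ≤ t →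
      (MeasureTheory.volume
          (⋃ i : Fin n, {s : ℝ | s ∈ Set.Icc 0 t ∧ |x - lam i * (t - s)| ≤ R})
        ≤ ENNReal.ofReal
            (max (∑ i ∈ Finset.univ.filter (fun i => 0 < lam i), 2 * R / lam i)
                 (∑ i ∈ Finset.univ.filter (fun i => lam i < 0), 2 * R / (-lam i))))
      ∧ (R ≤ x →
          MeasureTheory.volume
            (⋃ i : Fin n, {s : ℝ | s ∈ Set.Icc 0 t ∧ |x - lam i * (t - s)| ≤ R})
          ≤ ENNReal.ofReal (∑ i ∈ Finset.univ.filter (fun i => 0 < lam i), 2 * R / lam i))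
      ∧ (x ≤ -R →
          MeasureTheory.volume
            (⋃ i : Fin n, {s : ℝ | s ∈ Set.Icc 0 t ∧ |x - lam i * (t - s)| ≤ R})
          ≤ ENNReal.ofReal
              (∑ i ∈ Finset.univ.filter (fun i => lam i < 0), 2 * R / (-lam i))) := by
  intro x t _
  rw [← positiveSpeedDelay_neg]
  have hright : R ≤ x → volume (⋃ i, undampedTimes R x t (lam i)) ≤
      ENNReal.ofReal (positiveSpeedDelay R lam) :=
    fun hx => volume_iUnion_undampedTimes_le_of_le hR.le hx hlam
  have hleft : x ≤ -R → volume (⋃ i, undampedTimes R x t (lam i)) ≤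
      ENNReal.ofReal (positiveSpeedDelay R (-lam)) := fun hx => by
    simpa only [Pi.neg_apply, undampedTimes_neg] using
      volume_iUnion_undampedTimes_le_of_le (lam := -lam) (x := -x) (t := t) hR.le
        (by linarith) (fun i => neg_ne_zero.mpr (hlam i))
  refine ⟨?_, hright, hleft⟩
  by_cases hx : R ≤ x
  · exact (hright hx).trans (ENNReal.ofReal_le_ofReal (le_max_left _ _))
  by_cases hx' : x ≤ -R
  · exact (hleft hx').trans (ENNReal.ofReal_le_ofReal (le_max_right _ _))
  exact volume_iUnion_undampedTimes_le_max hR.le (abs_le.mpr ⟨by linarith, by linarith⟩) hlam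

/-- Sharpened bound on the total undamped time: with
`τ̄ = max(Σ_{λᵢ>0} 2R/λᵢ, Σ_{λᵢ<0} 2R/(−λᵢ))`, the measure of
`⋃ᵢ {s ∈ [0,t] : |x − λᵢ(t−s)| ≤ R}` is at most `τ̄` for every `x` and `t ≥ 0`;
moreover for `x ≥ R` it is at most the sum over positive speeds, and for `x ≤ −R`
at most the sum over negative speeds. -/
theorem stmt_10 (R : ℝ) (hR : 0 < R) (n : ℕ) (hn : 1 ≤ n) (lam : Fin n → ℝ)
    (hlam : ∀ i, lam i ≠ 0) :
    ∀ x t : ℝ, 0 ≤ t →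
      (MeasureTheory.volume
          (⋃ i : Fin n, {s : ℝ | s ∈ Set.Icc 0 t ∧ |x - lam i * (t - s)| ≤ R})
        ≤ ENNReal.ofReal
            (max (∑ i ∈ Finset.univ.filter (fun i => 0 < lam i), 2 * R / lam i)
                 (∑ i ∈ Finset.univ.filter (fun i => lam i < 0), 2 * R / (-lam i))))
      ∧ (R ≤ x →
          MeasureTheory.volume
            (⋃ i : Fin n, {s : ℝ | s ∈ Set.Icc 0 t ∧ |x - lam i * (t - s)| ≤ R})
          ≤ ENNReal.ofReal (∑ i ∈ Finset.univ.filter (fun i => 0 < lam i), 2 * R / lam i))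
      ∧ (x ≤ -R →
          MeasureTheory.volume
            (⋃ i : Fin n, {s : ℝ | s ∈ Set.Icc 0 t ∧ |x - lam i * (t - s)| ≤ R})
          ≤ ENNReal.ofReal
              (∑ i ∈ Finset.univ.filter (fun i => lam i < 0), 2 * R / (-lam i))) :=
  stmt_10_general R hR n lam hlam
end

section
/- Let R > 0, let p ≥ 2, and let μ₁ > μ₂ > … > μ_p > 0 be real numbers. Set x* := R·(μ_{p−1} + μ_p)/(μ_{p−1} − μ_p). Then the following are equivalent: (i) for every i ∈ {2, …, p}, (x* − R)/μᵢ = (x* + R)/μ_{i−1}; (ii) for every i ∈ {2, …, p}, μ_{i−1}/μᵢ = μ_{p−1}/μ_p. In particular, the p characteristics through the point x* occupy the undamped region consecutively without gaps or overlaps if and only if the speeds satisfy the constant-ratio (geometric progression) condition μ_{i−1}/μᵢ = μ_{p−1}/μ_p for all i. -/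
/-!
Writing `x* = R(a+b)/(a-b)` with `a = μ_{p-1}`, `b = μ_p`, one has `x* - R = 2Rb/(a-b)` and
`x* + R = 2Ra/(a-b)`. So each crossing condition `(x* - R)/μᵢ = (x* + R)/μ_{i-1}` reduces, after
cancelling the common factor `2R/(a-b)`, to `b/μᵢ = a/μ_{i-1}`, i.e. `μ_{i-1}/μᵢ = a/b`.
-/

lemma mul_add_div_sub_sub_self {R a b : ℝ} (hab : a ≠ b) :
    R * (a + b) / (a - b) - R = 2 * R / (a - b) * b := by
  field_simp [sub_ne_zero.mpr hab]
  ring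

lemma mul_add_div_sub_add_self {R a b : ℝ} (hab : a ≠ b) :
    R * (a + b) / (a - b) + R = 2 * R / (a - b) * a := by
  field_simp [sub_ne_zero.mpr hab]
  ring

theorem crossing_condition_iff_div_eq_div {R a b c d : ℝ} (hR : R ≠ 0) (hab : a ≠ b)
    (hb : b ≠ 0) (hc : c ≠ 0) (hd : d ≠ 0) :
    (R * (a + b) / (a - b) - R) / c = (R * (a + b) / (a - b) + R) / d ↔ d / c = a / b := by
  have hk : 2 * R / (a - b) ≠ 0 := div_ne_zero (by simpa) (sub_ne_zero.mpr hab)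
  rw [mul_add_div_sub_sub_self hab, mul_add_div_sub_add_self hab,
    mul_div_assoc _ b, mul_div_assoc _ a, mul_right_inj' hk,
    div_eq_div_iff hc hd, div_eq_div_iff hc hb]
  constructor <;> intro h <;> linarith

theorem stmt_14_general (R : ℝ) (hR : 0 < R) (p : ℕ) (μ : ℕ → ℝ)
    (hpos : ∀ i, 1 ≤ i → i ≤ p → 0 < μ i)
    (hdec : ∀ i, 1 ≤ i → i < p → μ (i + 1) < μ i) :
    ((∀ i, 2 ≤ i → i ≤ p →
        (R * (μ (p - 1) + μ p) / (μ (p - 1) - μ p) - R) / μ i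
          = (R * (μ (p - 1) + μ p) / (μ (p - 1) - μ p) + R) / μ (i - 1))
      ↔ (∀ i, 2 ≤ i → i ≤ p → μ (i - 1) / μ i = μ (p - 1) / μ p)) := by
  refine forall_congr' fun i => forall_congr' fun hi => forall_congr' fun hip => ?_
  have hlast : μ p < μ (p - 1) := by
    simpa [Nat.sub_add_cancel (by omega : 1 ≤ p)] using hdec (p - 1) (by omega) (by omega)
  exact crossing_condition_iff_div_eq_div hR.ne' hlast.ne' (hpos p (by omega) le_rfl).ne'
    (hpos i (by omega) hip).ne' (hpos (i - 1) (by omega) (by omega)).ne'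

/-- Constant-ratio characterization of gapless/overlap-free crossing. For decreasing
positive speeds `μ₁ > μ₂ > … > μ_p` (`p ≥ 2`) and `x* = R(μ_{p−1}+μ_p)/(μ_{p−1}−μ_p)`,
the exiting time of each speed-`μᵢ` characteristic equals the entering time of the
speed-`μ_{i−1}` one at `x*` (i.e. `(x*−R)/μᵢ = (x*+R)/μ_{i−1}` for all `2 ≤ i ≤ p`)
iff the speeds form a geometric progression: `μ_{i−1}/μᵢ = μ_{p−1}/μ_p` for all such `i`. -/
theorem stmt_14 (R : ℝ) (hR : 0 < R) (p : ℕ) (hp : 2 ≤ p) (μ : ℕ → ℝ)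
    (hpos : ∀ i, 1 ≤ i → i ≤ p → 0 < μ i)
    (hdec : ∀ i, 1 ≤ i → i < p → μ (i + 1) < μ i) :
    ((∀ i, 2 ≤ i → i ≤ p →
        (R * (μ (p - 1) + μ p) / (μ (p - 1) - μ p) - R) / μ i
          = (R * (μ (p - 1) + μ p) / (μ (p - 1) - μ p) + R) / μ (i - 1))
      ↔ (∀ i, 2 ≤ i → i ≤ p → μ (i - 1) / μ i = μ (p - 1) / μ p)) :=
  stmt_14_general R hR p μ hpos hdec
end
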